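/- For all real x ≠ 0, 9 > ((sinh x)/x)·(−6 + 5x³/(x·cosh x − sinh x)). -/

import Mathlib

/-!
The expression is even in `x`, so let `x > 0`. Since `x cosh x - sinh x > 0`, clearing
denominators turns the inequality into `G x > 0` for
`G x = (9x + 6 sinh x)(x cosh x - sinh x) - 5x³ sinh x`. Both `G` and `G'` vanish at `0`, and
`G'' x = x H x` with
`H x = 24 sinh x (cosh x - 1 - x²/2) + 7 ((3 + x²) sinh x - 3x cosh x)`,
where both brackets are positive; so `G'` and then `G` are positive on `(0, ∞)`.
-/

open Real

lemma pos_of_hasDerivAt_pos {f f' : ℝ → ℝ} (hf : ∀ y, HasDerivAt f (f' y) y)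
    (hf' : ∀ y, 0 < y → 0 < f' y) (h0 : f 0 = 0) {x : ℝ} (hx : 0 < x) : 0 < f x := by
  have hmono : StrictMonoOn f (Set.Ici 0) :=
    strictMonoOn_of_hasDerivWithinAt_pos (convex_Ici 0)
      (fun y _ ↦ (hf y).continuousAt.continuousWithinAt) (fun y _ ↦ (hf y).hasDerivWithinAt)
      (fun y hy ↦ hf' y (by simpa using hy))
  simpa [h0] using hmono Set.self_mem_Ici hx.le hx

lemma sinh_lt_mul_cosh {x : ℝ} (hx : 0 < x) : sinh x < x * cosh x := by
  suffices 0 < x * cosh x - sinh x by linarith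
  refine pos_of_hasDerivAt_pos (f := fun y ↦ y * cosh y - sinh y) (f' := fun y ↦ y * sinh y)
    (fun y ↦ ?_) (fun y hy ↦ mul_pos hy (sinh_pos_iff.2 hy)) (by simp) hx
  exact ((hasDerivAt_id' y).fun_mul (hasDerivAt_cosh y)).fun_sub (hasDerivAt_sinh y)
    |>.congr_deriv (by ring)

lemma three_mul_mul_cosh_lt_three_add_sq_mul_sinh {x : ℝ} (hx : 0 < x) :
    3 * x * cosh x < (3 + x ^ 2) * sinh x := by
  suffices 0 < (3 + x ^ 2) * sinh x - 3 * x * cosh x by linarith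
  refine pos_of_hasDerivAt_pos (f := fun y ↦ (3 + y ^ 2) * sinh y - 3 * y * cosh y)
    (f' := fun y ↦ y * (y * cosh y - sinh y))
    (fun y ↦ ?_) (fun y hy ↦ mul_pos hy (sub_pos.2 (sinh_lt_mul_cosh hy))) (by simp) hx
  exact (((hasDerivAt_pow 2 y).const_add 3).fun_mul (hasDerivAt_sinh y)).fun_sub
    (((hasDerivAt_id' y).const_mul 3).fun_mul (hasDerivAt_cosh y)) |>.congr_deriv (by ring)

lemma one_add_sq_div_two_lt_cosh {x : ℝ} (hx : x ≠ 0) : 1 + x ^ 2 / 2 < cosh x := by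
  have hsq : (x / 2) ^ 2 < sinh (x / 2) ^ 2 := by
    rw [sq_lt_sq, abs_sinh]
    exact self_lt_sinh_iff.2 (by positivity)
  have hcosh : cosh x = 1 + 2 * sinh (x / 2) ^ 2 := by
    have h := cosh_two_mul (x / 2)
    rw [mul_div_cancel₀ x two_ne_zero, cosh_sq] at h
    linarith
  rw [hcosh]
  linarith

lemma huygens_numerator_deriv_pos {x : ℝ} (hx : 0 < x) :
    0 < 9 * x * cosh x - 6 * x ^ 2 * sinh x - 6 * sinh x * cosh x
      + 6 * x * (cosh x ^ 2 + sinh x ^ 2) - 9 * sinh x - 5 * x ^ 3 * cosh x := by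
  refine pos_of_hasDerivAt_pos
    (f := fun y ↦ 9 * y * cosh y - 6 * y ^ 2 * sinh y - 6 * sinh y * cosh y
      + 6 * y * (cosh y ^ 2 + sinh y ^ 2) - 9 * sinh y - 5 * y ^ 3 * cosh y)
    (f' := fun y ↦ y * (24 * sinh y * cosh y - 3 * sinh y - 21 * y * cosh y - 5 * y ^ 2 * sinh y))
    (fun y ↦ ?_) (fun y hy ↦ mul_pos hy ?_) (by simp) hx
  · have hid := hasDerivAt_id' y
    have hs := hasDerivAt_sinh y
    have hc := hasDerivAt_cosh y
    exact (((hid.const_mul 9).fun_mul hc).fun_sub (((hasDerivAt_pow 2 y).const_mul 6).fun_mul hs)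
      |>.fun_sub ((hs.const_mul 6).fun_mul hc)
      |>.fun_add ((hid.const_mul 6).fun_mul ((hc.fun_pow 2).fun_add (hs.fun_pow 2)))
      |>.fun_sub (hs.const_mul 9)
      |>.fun_sub (((hasDerivAt_pow 3 y).const_mul 5).fun_mul hc)) |>.congr_deriv (by ring)
  · have hs := sinh_pos_iff.2 hy
    have h1 := one_add_sq_div_two_lt_cosh hy.ne'
    have h2 := three_mul_mul_cosh_lt_three_add_sq_mul_sinh hy
    linear_combination 24 * mul_lt_mul_of_pos_left h1 hs + 7 * h2

lemma huygens_numerator_pos {x : ℝ} (hx : 0 < x) :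
    0 < (9 * x + 6 * sinh x) * (x * cosh x - sinh x) - 5 * x ^ 3 * sinh x := by
  refine pos_of_hasDerivAt_pos
    (f := fun y ↦ (9 * y + 6 * sinh y) * (y * cosh y - sinh y) - 5 * y ^ 3 * sinh y)
    (fun y ↦ ?_) (fun y hy ↦ huygens_numerator_deriv_pos hy) (by simp) hx
  have hid := hasDerivAt_id' y
  have hs := hasDerivAt_sinh y
  exact (((hid.const_mul 9).fun_add (hs.const_mul 6)).fun_mul
      ((hid.fun_mul (hasDerivAt_cosh y)).fun_sub hs)).fun_sub
    (((hasDerivAt_pow 3 y).const_mul 5).fun_mul hs) |>.congr_deriv (by ring)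

lemma huygens_hyperbolic_of_pos {x : ℝ} (hx : 0 < x) :
    9 > (sinh x / x) * (-6 + 5 * x ^ 3 / (x * cosh x - sinh x)) := by
  have hD : 0 < x * cosh x - sinh x := sub_pos.2 (sinh_lt_mul_cosh hx)
  have hgap : 9 - (sinh x / x) * (-6 + 5 * x ^ 3 / (x * cosh x - sinh x))
      = ((9 * x + 6 * sinh x) * (x * cosh x - sinh x) - 5 * x ^ 3 * sinh x)
        / (x * (x * cosh x - sinh x)) := by
    field_simp
    ring
  have := div_pos (huygens_numerator_pos hx) (mul_pos hx hD)
  linarith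

theorem huygens_hyperbolic_special (x : ℝ) (hx : x ≠ 0) :
    9 > (Real.sinh x / x) * (-6 + 5 * x^3 / (x * Real.cosh x - Real.sinh x)) := by
  rcases hx.lt_or_gt with hneg | hpos
  · have h := huygens_hyperbolic_of_pos (neg_pos.2 hneg)
    rwa [sinh_neg, cosh_neg, neg_div_neg_eq, Odd.neg_pow (by decide), neg_mul, neg_sub_neg,
      ← neg_sub, mul_neg, neg_div_neg_eq] at h
  · exact huygens_hyperbolic_of_pos hpos
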